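/- Let G be an s-t graph with a tracking set of size at most k, where every vertex and edge of G lies on some s-t path. Then for every pair of vertices u, v of G, the maximum number of pairwise internally vertex-disjoint u-v paths in G is at most k + 1. -/

import Mathlib

/-!
Call a path of the family good if no vertex of `T` lies in its interior. The paths have disjoint
interiors, so at most `|T \ {u, v}|` of them are bad, and if `m ≥ k + 2` at least
`2 + |T ∩ {u, v}|` are good. Their union `D` is a theta graph on which only `u` and `v` can be
trackers. An `s`-`t` path through an edge of `D` first meets `D` at some `x` and last leaves it at
some `y ≠ x`; replacing its `x`-`y` segment by either of two distinct `x`-`y` paths inside `D` with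
the same trace would give two distinct `s`-`t` paths with the same trace. Such twin paths always
exist: two arcs of a cycle of `D` if `u, v ∉ T`; otherwise the detours `x → u → P i → v → y`
through two spare good paths `P i`, or, when `x` and `y` are interior to different good paths and
only one endpoint is tracked, such a detour and the direct route through the tracked endpoint.
-/

open Finset

/-- A tracking set for an s-t graph: any two distinct s-t paths yield different
sequences of vertices of `T`. -/
def IsTrackingSet {V : Type*} [DecidableEq V] (G : SimpleGraph V) (s t : V)
    (T : Finset V) : Prop :=
  ∀ p q : G.Path s t,
    p.1.support.filter (· ∈ T) = q.1.support.filter (· ∈ T) → p = q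

theorem List.Nodup.filter_mem_eq_filter_singleton {α : Type*} [DecidableEq α] {T : Finset α}
    {l : List α} {b : α} (hl : l.Nodup) (hb : b ∈ l) (h : ∀ w ∈ l, w ∈ T → w = b) :
    l.filter (· ∈ T) = [b].filter (· ∈ T) := by
  by_cases hbT : b ∈ T
  · have : l.filter (· ∈ T) = l.filter (· == b) :=
      List.filter_congr fun w hw => by
        by_cases hwb : w = b
        · subst hwb
          simp only [hbT, decide_true, beq_self_eq_true]
        · have hwT : w ∉ T := fun hwT => hwb (h w hw hwT)
          simp [hwb, hwT]
    rw [this, List.filter_beq, List.count_eq_one_of_mem hl hb]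
    simp [hbT]
  · simp only [List.filter_singleton, hbT, decide_false, cond_false, List.filter_eq_nil_iff,
      decide_eq_true_eq]
    exact fun w hw hwT => hbT (h w hw hwT ▸ hwT)

namespace SimpleGraph

variable {V : Type*} {G : SimpleGraph V} {u v w x y : V}

namespace Walk

def InternallyDisjoint (p q : G.Walk u v) : Prop :=
  ∀ w ∈ p.support, w ∈ q.support → w = u ∨ w = v

def InternallyAvoids (T : Finset V) (p : G.Walk u v) : Prop :=
  ∀ w ∈ p.support, w ∈ T → w = u ∨ w = v

theorem append_right_injective (p : G.Walk u v) :
    Function.Injective (p.append : G.Walk v w → G.Walk u w) := fun q q' h =>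
  darts_injective <| List.append_cancel_left <| by
    simpa only [darts_append] using congrArg darts h

theorem append_left_injective (q : G.Walk v w) :
    Function.Injective fun p : G.Walk u v => p.append q := fun p p' h =>
  darts_injective <| List.append_cancel_right <| by
    simpa only [darts_append] using congrArg darts h

theorem IsPath.start_notMem_tail_support {p : G.Walk u v} (hp : p.IsPath) :
    u ∉ p.support.tail := by
  have h := hp.support_nodup
  rw [← cons_tail_support, List.nodup_cons] at h
  exact h.1

theorem IsPath.append {p : G.Walk u v} {q : G.Walk v w} (hp : p.IsPath) (hq : q.IsPath)
    (h : ∀ z ∈ p.support, z ∈ q.support → z = v) : (p.append q).IsPath := by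
  rw [isPath_def, support_append, List.nodup_append]
  refine ⟨hp.support_nodup, hq.support_nodup.sublist q.support.tail_sublist, ?_⟩
  rintro z hz _ hz' rfl
  obtain rfl := h z hz (List.mem_of_mem_tail hz')
  exact hq.start_notMem_tail_support hz'

theorem IsPath.eq_of_mem_takeUntil_of_mem_dropUntil [DecidableEq V] {p : G.Walk u v}
    (hp : p.IsPath) (hx : x ∈ p.support) (h₁ : w ∈ (p.takeUntil x hx).support)
    (h₂ : w ∈ (p.dropUntil x hx).support) : w = x := by
  by_contra h
  rw [← p.take_spec hx] at hp
  exact hp.ne_of_mem_support_of_append h h₁ h₂ rfl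

theorem mem_dropUntil_or_mem_dropUntil [DecidableEq V] (p : G.Walk u v) (hx : x ∈ p.support)
    (hy : y ∈ p.support) (hxy : x ≠ y) :
    y ∈ (p.dropUntil x hx).support ∨ x ∈ (p.dropUntil y hy).support := by
  by_contra! h
  have hyx : y ∈ (p.takeUntil x hx).support := by
    rw [← p.take_spec hx, mem_support_append_iff] at hy
    exact hy.resolve_right h.1
  have hxy' := notMem_support_takeUntil_support_takeUntil_subset hxy.symm hx hyx
  rw [← p.take_spec hy, mem_support_append_iff] at hx
  exact hx.elim hxy' h.2

theorem IsPath.isCycle_append_reverse {p q : G.Walk u v} (hp : p.IsPath) (hq : q.IsPath)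
    (hpq : p ≠ q) (hd : p.InternallyDisjoint q) : (p.append q.reverse).IsCycle := by
  refine hp.isCycle_append hq.reverse (fun w hw hw' => ?_) ?_
  · have hwq : w ∈ q.support := by simpa using List.mem_of_mem_tail hw'
    rcases hd w (List.mem_of_mem_tail hw) hwq with rfl | rfl
    exacts [hp.start_notMem_tail_support hw, hq.reverse.start_notMem_tail_support hw']
  · by_contra! h
    exact hpq (eq_of_length_le_one h.1 (by simpa using h.2))

theorem IsCycle.exists_isPath_ne [DecidableEq V] {c : G.Walk u u} (hc : c.IsCycle)
    (hx : x ∈ c.support) (hy : y ∈ c.support) (hxy : x ≠ y) :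
    ∃ R₁ R₂ : G.Walk x y, R₁.IsPath ∧ R₂.IsPath ∧ R₁ ≠ R₂ ∧
      R₁.support ⊆ c.support ∧ R₂.support ⊆ c.support := by
  set c' := c.rotate x hx
  have hsub : c'.support ⊆ c.support := fun z hz => (mem_support_rotate_iff _ _ _).mp hz
  have hy' : y ∈ c'.support := (mem_support_rotate_iff _ _ _).mpr hy
  have hc' : ((c'.takeUntil y hy').append (c'.dropUntil y hy')).IsCycle := by
    rw [c'.take_spec]
    exact hc.rotate hx
  refine ⟨c'.takeUntil y hy', (c'.dropUntil y hy').reverse, (hc.rotate hx).isPath_takeUntil hy',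
    (hc'.isPath_of_append_right (not_nil_of_ne hxy)).reverse, fun h => ?_,
    List.Subset.trans (c'.support_takeUntil_subset_support hy') hsub, ?_⟩
  · -- a cycle cannot return along the path it went out on
    have hedges := hc'.edges_nodup
    rw [← reverse_reverse (c'.dropUntil y hy'), ← h, edges_append, edges_reverse,
      List.nodup_append] at hedges
    obtain ⟨e, he⟩ := List.exists_mem_of_ne_nil _ (edges_eq_nil.not.mpr (not_nil_of_ne hxy))
    exact hedges.2.2 e he e (List.mem_reverse.mpr he) rfl
  · rw [support_reverse, List.reverse_subset]
    exact List.Subset.trans (c'.support_dropUntil_subset_support hy') hsub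

theorem exists_eq_append_of_exists_mem (D : Set V) :
    ∀ {a b : V} (Q : G.Walk a b), (∃ w ∈ Q.support, w ∈ D) →
      ∃ (x : V) (q₁ : G.Walk a x) (q₂ : G.Walk x b),
        Q = q₁.append q₂ ∧ x ∈ D ∧ ∀ w ∈ q₁.support, w ∈ D → w = x
  | _, _, nil, ⟨w, hw, hwD⟩ => by
    rw [support_nil, List.mem_singleton] at hw
    subst hw
    exact ⟨_, nil, nil, rfl, hwD, by simp⟩
  | a, _, cons h Q, ⟨w, hw, hwD⟩ => by
    by_cases ha : a ∈ D
    · exact ⟨a, nil, cons h Q, rfl, ha, by simp⟩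
    · have hwQ : w ∈ Q.support := by
        rw [support_cons, List.mem_cons] at hw
        exact hw.resolve_left (by rintro rfl; exact ha hwD)
      obtain ⟨x, q₁, q₂, rfl, hxD, hq₁⟩ := exists_eq_append_of_exists_mem D Q ⟨w, hwQ, hwD⟩
      refine ⟨x, cons h q₁, q₂, rfl, hxD, fun z hz hzD => ?_⟩
      rw [support_cons, List.mem_cons] at hz
      exact hz.elim (by rintro rfl; exact absurd hzD ha) (hq₁ z · hzD)

theorem IsPath.exists_eq_append_append (D : Set V) {s t : V} {Q : G.Walk s t}
    (hQ : Q.IsPath) {z₁ z₂ : V} (hz₁ : z₁ ∈ Q.support) (hz₂ : z₂ ∈ Q.support) (hz₁D : z₁ ∈ D)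
    (hz₂D : z₂ ∈ D) (hz : z₁ ≠ z₂) :
    ∃ (x y : V) (Qs : G.Walk s x) (Qm : G.Walk x y) (Qt : G.Walk y t),
      Q = Qs.append (Qm.append Qt) ∧ x ∈ D ∧ y ∈ D ∧ x ≠ y ∧
      (∀ w ∈ Qs.support, w ∈ D → w = x) ∧ (∀ w ∈ Qt.support, w ∈ D → w = y) := by
  obtain ⟨x, Qs, Qr, rfl, hxD, hQs⟩ := exists_eq_append_of_exists_mem D Q ⟨z₁, hz₁, hz₁D⟩
  obtain ⟨y, Qt', Qm', hQr, hyD, hQt⟩ :=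
    exists_eq_append_of_exists_mem D Qr.reverse ⟨x, by simp, hxD⟩
  rw [← reverse_reverse Qr, hQr, reverse_append] at hQ hz₁ hz₂ ⊢
  refine ⟨x, y, Qs, Qm'.reverse, Qt'.reverse, rfl, hxD, hyD, ?_, hQs, by simpa using hQt⟩
  rintro rfl
  -- otherwise every vertex of `D` on the path would be `x`
  have hQm : Qm'.reverse.Nil := isPath_iff_nil.mp hQ.of_append_right.of_append_left
  have hall : ∀ z ∈ (Qs.append (Qm'.reverse.append Qt'.reverse)).support, z ∈ D → z = x := by
    intro z hz hzD
    rw [mem_support_append_iff, mem_support_append_iff, nil_iff_support_eq.mp hQm,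
      support_reverse, List.mem_reverse, List.mem_singleton] at hz
    rcases hz with hz | hz | hz
    exacts [hQs z hz hzD, hz, hQt z hz hzD]
  exact hz ((hall z₁ hz₁ hz₁D).trans (hall z₂ hz₂ hz₂D).symm)

end Walk

open Walk

def HasTwinPaths [DecidableEq V] (G : SimpleGraph V) (T : Finset V) (D : Set V) (x y : V) :
    Prop :=
  ∃ R₁ R₂ : G.Walk x y, R₁.IsPath ∧ R₂.IsPath ∧ R₁ ≠ R₂ ∧ (∀ w ∈ R₁.support, w ∈ D) ∧
    (∀ w ∈ R₂.support, w ∈ D) ∧ R₁.support.filter (· ∈ T) = R₂.support.filter (· ∈ T)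

theorem HasTwinPaths.symm [DecidableEq V] {T : Finset V} {D : Set V}
    (h : HasTwinPaths G T D x y) : HasTwinPaths G T D y x := by
  obtain ⟨R₁, R₂, hR₁, hR₂, hne, hR₁D, hR₂D, htr⟩ := h
  refine ⟨R₁.reverse, R₂.reverse, hR₁.reverse, hR₂.reverse,
    mt reverse_injective.eq_iff.mp hne, ?_, ?_, ?_⟩
  · simpa using hR₁D
  · simpa using hR₂D
  · simp only [support_reverse, List.filter_reverse, htr]

theorem _root_.IsTrackingSet.not_hasTwinPaths [DecidableEq V] {s t : V} {T : Finset V} {D : Set V}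
    (hT : IsTrackingSet G s t T) {Qs : G.Walk s x} {Qm : G.Walk x y} {Qt : G.Walk y t}
    (hQ : (Qs.append (Qm.append Qt)).IsPath) (hQs : ∀ w ∈ Qs.support, w ∈ D → w = x)
    (hQt : ∀ w ∈ Qt.support, w ∈ D → w = y) : ¬ HasTwinPaths G T D x y := by
  rintro ⟨R₁, R₂, hR₁, hR₂, hne, hR₁D, hR₂D, htr⟩
  have hst : ∀ w ∈ Qs.support, w ∈ Qt.support → w = x := fun w hw hw' => by
    by_contra h
    exact hQ.ne_of_mem_support_of_append h hw ((mem_support_append_iff _ _).mpr (.inr hw')) rfl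
  have hpath : ∀ R : G.Walk x y, R.IsPath → (∀ w ∈ R.support, w ∈ D) →
      (Qs.append (R.append Qt)).IsPath := fun R hR hRD =>
    hQ.of_append_left.append (hR.append hQ.of_append_right.of_append_right
      fun w hw hw' => hQt w hw' (hRD w hw)) fun w hw hw' =>
        ((mem_support_append_iff _ _).mp hw').elim (hQs w hw <| hRD w ·) (hst w hw)
  have := hT ⟨_, hpath R₁ hR₁ hR₁D⟩ ⟨_, hpath R₂ hR₂ hR₂D⟩ (by
    simp only [support_append_eq_support_dropLast_append Qs, support_append R₁,
      support_append R₂, List.filter_append, htr])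
  exact hne (append_left_injective _ (append_right_injective _ (congrArg Subtype.val this)))

variable {ι : Type*}

structure IsUntrackedTheta (T : Finset V) (P : ι → G.Walk u v) : Prop where
  isPath : ∀ i, (P i).IsPath
  injective : Function.Injective P
  internallyDisjoint : Pairwise fun i j => (P i).InternallyDisjoint (P j)
  internallyAvoids : ∀ i, (P i).InternallyAvoids T

def supportUnion (P : ι → G.Walk u v) : Set V := {w | ∃ i, w ∈ (P i).support}

theorem supportUnion_reverse (P : ι → G.Walk u v) :
    supportUnion (fun i => (P i).reverse) = supportUnion P := by
  simp [supportUnion]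

theorem mem_supportUnion_of_mem_around {P : ι → G.Walk u v} {a b k : ι} {p : G.Walk u x}
    {q : G.Walk y v} (hpa : p.support ⊆ (P a).support) (hqb : q.support ⊆ (P b).support)
    (hw : w ∈ (p.reverse.append ((P k).append q.reverse)).support) : w ∈ supportUnion P := by
  simp only [mem_support_append_iff, support_reverse, List.mem_reverse] at hw
  rcases hw with hw | hw | hw
  exacts [⟨a, hpa hw⟩, ⟨k, hw⟩, ⟨b, hqb hw⟩]

namespace IsUntrackedTheta

variable {T : Finset V} {P : ι → G.Walk u v}

theorem reverse (hθ : IsUntrackedTheta T P) : IsUntrackedTheta T fun i => (P i).reverse where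
  isPath i := (hθ.isPath i).reverse
  injective := reverse_injective.comp hθ.injective
  internallyDisjoint i j hij w hi hj := by
    rw [support_reverse, List.mem_reverse] at hi hj
    exact (hθ.internallyDisjoint hij w hi hj).symm
  internallyAvoids i w hw hwT := by
    rw [support_reverse, List.mem_reverse] at hw
    exact (hθ.internallyAvoids i w hw hwT).symm

theorem eq_or_eq_of_mem_supportUnion (hθ : IsUntrackedTheta T P) (hw : w ∈ supportUnion P)
    (hwT : w ∈ T) : w = u ∨ w = v :=
  hw.elim fun i hi => hθ.internallyAvoids i w hi hwT

theorem disjoint_takeUntil_dropUntil [DecidableEq V] (hθ : IsUntrackedTheta T P) {a b : ι}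
    (hab : a ≠ b) (hx : x ∈ (P a).support) (hy : y ∈ (P b).support) (hxv : x ≠ v)
    (hyu : y ≠ u) :
    ((P a).takeUntil x hx).support.Disjoint ((P b).dropUntil y hy).support := by
  intro w hw hw'
  rcases hθ.internallyDisjoint hab w ((P a).support_takeUntil_subset_support hx hw)
    ((P b).support_dropUntil_subset_support hy hw') with rfl | rfl
  · exact hyu ((hθ.isPath b).eq_of_mem_takeUntil_of_mem_dropUntil hy (start_mem_support _)
      hw').symm
  · exact endpoint_notMem_support_takeUntil (hθ.isPath a) hx hxv.symm hw

theorem isPath_around (hθ : IsUntrackedTheta T P) {a b k : ι} (hka : k ≠ a) (hkb : k ≠ b)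
    {p : G.Walk u x} {q : G.Walk y v} (hp : p.IsPath) (hq : q.IsPath)
    (hpa : p.support ⊆ (P a).support) (hqb : q.support ⊆ (P b).support)
    (hpq : p.support.Disjoint q.support) :
    (p.reverse.append ((P k).append q.reverse)).IsPath := by
  refine hp.reverse.append ((hθ.isPath k).append hq.reverse fun w hw hw' => ?_)
    fun w hw hw' => ?_
  · rw [support_reverse, List.mem_reverse] at hw'
    refine (hθ.internallyDisjoint hkb w hw (hqb hw')).resolve_left ?_
    rintro rfl
    exact hpq p.start_mem_support hw'
  · rw [support_reverse, List.mem_reverse] at hw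
    rw [mem_support_append_iff, support_reverse, List.mem_reverse] at hw'
    refine hw'.elim (fun hw' => (hθ.internallyDisjoint hka w hw' (hpa hw)).resolve_right ?_)
      (absurd · (hpq hw))
    rintro rfl
    exact hpq hw q.end_mem_support

theorem isPath_through_start [DecidableEq V] (hθ : IsUntrackedTheta T P) {a b : ι}
    (hab : a ≠ b) (hx : x ∈ (P a).support) (hy : y ∈ (P b).support) (hxv : x ≠ v) :
    (((P a).takeUntil x hx).reverse.append ((P b).takeUntil y hy)).IsPath :=
  ((hθ.isPath a).takeUntil hx).reverse.append ((hθ.isPath b).takeUntil hy) fun w hw hw' => by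
    rw [support_reverse, List.mem_reverse] at hw
    refine (hθ.internallyDisjoint hab w ((P a).support_takeUntil_subset_support hx hw)
      ((P b).support_takeUntil_subset_support hy hw')).resolve_right ?_
    rintro rfl
    exact endpoint_notMem_support_takeUntil (hθ.isPath a) hx hxv.symm hw

theorem filter_tail_support [DecidableEq V] (hθ : IsUntrackedTheta T P) (huv : u ≠ v) (k : ι) :
    (P k).support.tail.filter (· ∈ T) = [v].filter (· ∈ T) :=
  (hθ.isPath k).support_nodup.sublist (List.tail_sublist _) |>.filter_mem_eq_filter_singleton
    ((P k).end_mem_tail_support_of_ne huv) fun w hw hwT =>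
      (hθ.internallyAvoids k w (List.mem_of_mem_tail hw) hwT).resolve_left <| by
        rintro rfl
        exact (hθ.isPath k).start_notMem_tail_support hw

theorem hasTwinPaths_around [DecidableEq V] (hθ : IsUntrackedTheta T P) (huv : u ≠ v)
    {a b i j : ι} (hij : i ≠ j) (hia : i ≠ a) (hib : i ≠ b) (hja : j ≠ a) (hjb : j ≠ b)
    {p : G.Walk u x} {q : G.Walk y v} (hp : p.IsPath) (hq : q.IsPath)
    (hpa : p.support ⊆ (P a).support) (hqb : q.support ⊆ (P b).support)
    (hpq : p.support.Disjoint q.support) : HasTwinPaths G T (supportUnion P) x y := by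
  have htrace : ∀ k, (p.reverse.append ((P k).append q.reverse)).support.filter (· ∈ T) =
      p.reverse.support.filter (· ∈ T) ++
        ([v].filter (· ∈ T) ++ q.reverse.support.tail.filter (· ∈ T)) := fun k => by
    rw [support_append, tail_support_append, List.filter_append, List.filter_append,
      hθ.filter_tail_support huv]
  refine ⟨_, _, hθ.isPath_around hia hib hp hq hpa hqb hpq,
    hθ.isPath_around hja hjb hp hq hpa hqb hpq, fun h => hij ?_,
    fun _ => mem_supportUnion_of_mem_around hpa hqb,
    fun _ => mem_supportUnion_of_mem_around hpa hqb, by rw [htrace, htrace]⟩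
  exact hθ.injective (append_left_injective _ (append_right_injective _ h))

theorem hasTwinPaths_of_ends_notMem [DecidableEq V] (hθ : IsUntrackedTheta T P) (huT : u ∉ T)
    (hvT : v ∉ T) {a b : ι} (hab : a ≠ b) (hx : x ∈ (P a).support ∨ x ∈ (P b).support)
    (hy : y ∈ (P a).support ∨ y ∈ (P b).support) (hxy : x ≠ y) :
    HasTwinPaths G T (supportUnion P) x y := by
  have hmem : ∀ {z}, z ∈ ((P a).append (P b).reverse).support ↔
      z ∈ (P a).support ∨ z ∈ (P b).support := by
    simp [mem_support_append_iff]
  have hD : ∀ z ∈ ((P a).append (P b).reverse).support, z ∈ supportUnion P := fun z hz =>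
    (hmem.mp hz).elim (⟨a, ·⟩) (⟨b, ·⟩)
  obtain ⟨R₁, R₂, hR₁, hR₂, hne, hR₁c, hR₂c⟩ :=
    ((hθ.isPath a).isCycle_append_reverse (hθ.isPath b) (hθ.injective.ne hab)
      (hθ.internallyDisjoint hab)).exists_isPath_ne (hmem.mpr hx) (hmem.mpr hy) hxy
  have htrace : ∀ R : G.Walk x y, R.support ⊆ ((P a).append (P b).reverse).support →
      R.support.filter (· ∈ T) = [] := fun R hR =>
    List.filter_eq_nil_iff.mpr fun w hw hwT => by
      have hwT : w ∈ T := of_decide_eq_true hwT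
      rcases hθ.eq_or_eq_of_mem_supportUnion (hD w (hR hw)) hwT with rfl | rfl
      exacts [huT hwT, hvT hwT]
  exact ⟨R₁, R₂, hR₁, hR₂, hne, fun w hw => hD w (hR₁c hw), fun w hw => hD w (hR₂c hw), by
    rw [htrace R₁ hR₁c, htrace R₂ hR₂c]⟩

theorem hasTwinPaths_of_mem_dropUntil [DecidableEq V] (hθ : IsUntrackedTheta T P)
    (huv : u ≠ v) {a i j : ι} (hij : i ≠ j) (hia : i ≠ a) (hja : j ≠ a)
    (hx : x ∈ (P a).support) (hy : y ∈ ((P a).dropUntil x hx).support) (hxy : x ≠ y) :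
    HasTwinPaths G T (supportUnion P) x y := by
  have hA := hθ.isPath a
  refine hθ.hasTwinPaths_around huv hij hia hia hja hja (hA.takeUntil hx)
    ((hA.dropUntil hx).dropUntil hy) ((P a).support_takeUntil_subset_support hx)
    (List.Subset.trans (support_dropUntil_subset_support _ hy)
      ((P a).support_dropUntil_subset_support hx))
    fun w hw hw' => hxy ?_
  obtain rfl := hA.eq_of_mem_takeUntil_of_mem_dropUntil hx hw
    (support_dropUntil_subset_support _ hy hw')
  exact (hA.dropUntil hx).eq_of_mem_takeUntil_of_mem_dropUntil hy (start_mem_support _) hw'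

theorem hasTwinPaths_of_end_notMem [DecidableEq V] (hθ : IsUntrackedTheta T P)
    (hvT : v ∉ T) {a b c : ι} (hab : a ≠ b) (hca : c ≠ a) (hcb : c ≠ b)
    (hx : x ∈ (P a).support) (hy : y ∈ (P b).support) (hxv : x ≠ v) (hyu : y ≠ u)
    (hyv : y ≠ v) : HasTwinPaths G T (supportUnion P) x y := by
  set R₁ := ((P a).takeUntil x hx).reverse.append ((P c).append ((P b).dropUntil y hy).reverse)
  set R₂ := ((P a).takeUntil x hx).reverse.append ((P b).takeUntil y hy)
  have hR₁ : R₁.IsPath := hθ.isPath_around hca hcb ((hθ.isPath a).takeUntil hx)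
    ((hθ.isPath b).dropUntil hy) ((P a).support_takeUntil_subset_support hx)
    ((P b).support_dropUntil_subset_support hy)
    (hθ.disjoint_takeUntil_dropUntil hab hx hy hxv hyu)
  have hR₂ : R₂.IsPath := hθ.isPath_through_start hab hx hy hxv
  have hR₁D : ∀ w ∈ R₁.support, w ∈ supportUnion P := fun _ =>
    mem_supportUnion_of_mem_around ((P a).support_takeUntil_subset_support hx)
      ((P b).support_dropUntil_subset_support hy)
  have hR₂D : ∀ w ∈ R₂.support, w ∈ supportUnion P := fun w hw => by
    simp only [R₂, mem_support_append_iff, support_reverse, List.mem_reverse] at hw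
    exact hw.elim (fun hw => ⟨a, (P a).support_takeUntil_subset_support hx hw⟩)
      fun hw => ⟨b, (P b).support_takeUntil_subset_support hy hw⟩
  -- both routes pass through `u`, the only vertex of `D` that can be in `T`
  have htrace : ∀ R : G.Walk x y, R.IsPath → u ∈ R.support →
      (∀ w ∈ R.support, w ∈ supportUnion P) →
      R.support.filter (· ∈ T) = [u].filter (· ∈ T) := fun R hR hu hRD =>
    hR.support_nodup.filter_mem_eq_filter_singleton hu fun w hw hwT =>
      (hθ.eq_or_eq_of_mem_supportUnion (hRD w hw) hwT).resolve_right
        (by rintro rfl; exact hvT hwT)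
  refine ⟨R₁, R₂, hR₁, hR₂, fun h => ?_, hR₁D, hR₂D, by
    rw [htrace R₁ hR₁ (by simp [R₁]) hR₁D, htrace R₂ hR₂ (by simp [R₂]) hR₂D]⟩
  have hvR₂ : v ∈ R₂.support := h ▸ by simp [R₁]
  simp only [R₂, mem_support_append_iff, support_reverse, List.mem_reverse] at hvR₂
  exact hvR₂.elim (endpoint_notMem_support_takeUntil (hθ.isPath a) hx hxv.symm)
    (endpoint_notMem_support_takeUntil (hθ.isPath b) hy hyv.symm)

theorem hasTwinPaths_of_mem_support [DecidableEq V] [Fintype ι] (hθ : IsUntrackedTheta T P)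
    (huv : u ≠ v) (hcard : 3 ≤ Fintype.card ι) {c : ι} (hx : x ∈ (P c).support)
    (hy : y ∈ (P c).support) (hxy : x ≠ y) : HasTwinPaths G T (supportUnion P) x y := by
  classical
  obtain ⟨i, hi, j, hj, hij⟩ := one_lt_card.mp (by
    rw [card_compl, card_singleton]; omega : 1 < #({c}ᶜ : Finset ι))
  rw [mem_compl, mem_singleton] at hi hj
  rcases (P c).mem_dropUntil_or_mem_dropUntil hx hy hxy with h | h
  · exact hθ.hasTwinPaths_of_mem_dropUntil huv hij hi hj hx h hxy
  · exact (hθ.hasTwinPaths_of_mem_dropUntil huv hij hi hj hy h hxy.symm).symm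

theorem hasTwinPaths_of_mem_support_of_ne [DecidableEq V] [Fintype ι]
    (hθ : IsUntrackedTheta T P) (huv : u ≠ v) (hcard : 2 + #(T ∩ {u, v}) ≤ Fintype.card ι)
    (hT1 : 1 ≤ #(T ∩ {u, v})) {a b : ι} (hx : x ∈ (P a).support) (hy : y ∈ (P b).support)
    (hxy : ∀ c, x ∈ (P c).support → y ∉ (P c).support) :
    HasTwinPaths G T (supportUnion P) x y := by
  classical
  have hab : a ≠ b := by rintro rfl; exact hxy a hx hy
  have hxu : x ≠ u := by rintro rfl; exact hxy b (start_mem_support _) hy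
  have hxv : x ≠ v := by rintro rfl; exact hxy b (end_mem_support _) hy
  have hyu : y ≠ u := by rintro rfl; exact hxy a hx (start_mem_support _)
  have hyv : y ≠ v := by rintro rfl; exact hxy a hx (end_mem_support _)
  have hab2 := card_le_two (a := a) (b := b)
  by_cases huvT : u ∈ T ∧ v ∈ T
  · have hT2 : #(T ∩ {u, v}) = 2 := by
      rw [inter_eq_right.mpr (by simp [insert_subset_iff, huvT]), card_pair huv]
    obtain ⟨i, hi, j, hj, hij⟩ := one_lt_card.mp (by
      rw [card_compl]; omega : 1 < #({a, b}ᶜ : Finset ι))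
    simp only [mem_compl, mem_insert, mem_singleton, not_or] at hi hj
    exact hθ.hasTwinPaths_around huv hij hi.1 hi.2 hj.1 hj.2 ((hθ.isPath a).takeUntil hx)
      ((hθ.isPath b).dropUntil hy) ((P a).support_takeUntil_subset_support hx)
      ((P b).support_dropUntil_subset_support hy)
      (hθ.disjoint_takeUntil_dropUntil hab hx hy hxv hyu)
  obtain ⟨c, hc⟩ := card_pos.mp (by rw [card_compl]; omega : 0 < #({a, b}ᶜ : Finset ι))
  simp only [mem_compl, mem_insert, mem_singleton, not_or] at hc
  rcases not_and_or.mp huvT with huT | hvT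
  · simpa only [supportUnion_reverse] using
      hθ.reverse.hasTwinPaths_of_end_notMem huT hab hc.1 hc.2 (by simpa using hx)
        (by simpa using hy) hxu hyv hyu
  · exact hθ.hasTwinPaths_of_end_notMem hvT hab hc.1 hc.2 hx hy hxv hyu hyv

theorem hasTwinPaths [DecidableEq V] [Fintype ι] (hθ : IsUntrackedTheta T P) (huv : u ≠ v)
    (hcard : 2 + #(T ∩ {u, v}) ≤ Fintype.card ι) (hx : x ∈ supportUnion P)
    (hy : y ∈ supportUnion P) (hxy : x ≠ y) : HasTwinPaths G T (supportUnion P) x y := by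
  obtain ⟨a, hxa⟩ := hx
  obtain ⟨b, hyb⟩ := hy
  by_cases hT : u ∈ T ∨ v ∈ T
  · have hT1 : 1 ≤ #(T ∩ {u, v}) := card_pos.mpr (hT.elim (⟨u, by simp [·]⟩) (⟨v, by simp [·]⟩))
    by_cases hcommon : ∃ c, x ∈ (P c).support ∧ y ∈ (P c).support
    · obtain ⟨c, hxc, hyc⟩ := hcommon
      exact hθ.hasTwinPaths_of_mem_support huv (by omega) hxc hyc hxy
    · exact hθ.hasTwinPaths_of_mem_support_of_ne huv hcard hT1 hxa hyb (by simpa using hcommon)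
  obtain ⟨c, hca, hyc⟩ : ∃ c, c ≠ a ∧ (y ∈ (P a).support ∨ y ∈ (P c).support) := by
    rcases eq_or_ne b a with rfl | hba
    · obtain ⟨c, hc⟩ := Fintype.exists_ne_of_one_lt_card (by omega) b
      exact ⟨c, hc, .inl hyb⟩
    · exact ⟨b, hba, .inr hyb⟩
  rw [not_or] at hT
  exact hθ.hasTwinPaths_of_ends_notMem hT.1 hT.2 hca.symm (.inl hxa) hyc hxy

end IsUntrackedTheta

theorem card_le_card_sdiff_of_not_internallyAvoids [DecidableEq V] {P : ι → G.Walk u v}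
    (hd : Pairwise fun i j => (P i).InternallyDisjoint (P j)) {T : Finset V} (s : Finset ι)
    (hs : ∀ i ∈ s, ¬(P i).InternallyAvoids T) : #s ≤ #(T \ {u, v}) := by
  have hw : ∀ i ∈ s, ∃ w ∈ T \ {u, v}, w ∈ (P i).support := fun i hi => by
    obtain ⟨w, hw, hwT, hwuv⟩ : ∃ w ∈ (P i).support, w ∈ T ∧ ¬(w = u ∨ w = v) := by
      simpa [InternallyAvoids] using hs i hi
    exact ⟨w, by simpa [hwT] using hwuv, hw⟩
  have : Nonempty V := ⟨u⟩
  choose! f hfT hfP using hw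
  refine card_le_card_of_injOn f (fun i hi => hfT i hi) fun i hi j hj hij => ?_
  by_contra hne
  have := hfT i hi
  rcases hd hne _ (hfP i hi) (hij ▸ hfP j hj) with h | h <;> simp [h] at this

theorem two_add_card_inter_le_card_filter_internallyAvoids [DecidableEq V] [Fintype ι]
    {P : ι → G.Walk u v} (hd : Pairwise fun i j => (P i).InternallyDisjoint (P j))
    {T : Finset V} [DecidablePred fun i => (P i).InternallyAvoids T] {k : ℕ} (hTk : #T ≤ k)
    (hk : k + 1 < Fintype.card ι) :
    2 + #(T ∩ {u, v}) ≤ #{i | (P i).InternallyAvoids T} := by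
  have := card_le_card_sdiff_of_not_internallyAvoids hd (T := T)
    {i | ¬(P i).InternallyAvoids T} (by simp)
  have := card_filter_add_card_filter_not (s := univ) fun i => (P i).InternallyAvoids T
  have := card_inter_add_card_sdiff T {u, v}
  rw [card_univ] at *
  omega

theorem _root_.IsTrackingSet.exists_not_hasTwinPaths [DecidableEq V] {s t : V} {T : Finset V}
    (hT : IsTrackingSet G s t T) (hpartE : ∀ e ∈ G.edgeSet, ∃ p : G.Path s t, e ∈ p.1.edges)
    {D : Set V} {z₁ z₂ : V} (hz : G.Adj z₁ z₂) (hz₁ : z₁ ∈ D) (hz₂ : z₂ ∈ D) :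
    ∃ x ∈ D, ∃ y ∈ D, x ≠ y ∧ ¬ HasTwinPaths G T D x y := by
  obtain ⟨Q, hQ⟩ := hpartE _ (G.mem_edgeSet.mpr hz)
  obtain ⟨x, y, Qs, Qm, Qt, hQeq, hx, hy, hxy, hQs, hQt⟩ := Q.2.exists_eq_append_append D
    (Q.1.fst_mem_support_of_mem_edges hQ) (Q.1.snd_mem_support_of_mem_edges hQ) hz₁ hz₂ hz.ne
  exact ⟨x, hx, y, hy, hxy, hT.not_hasTwinPaths (hQeq ▸ Q.2) hQs hQt⟩

end SimpleGraph

open SimpleGraph Walk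

theorem disjoint_paths_le_k_add_one_general {V : Type*} [DecidableEq V]
    (G : SimpleGraph V) (s t : V) (k : ℕ)
    (hpartE : ∀ e ∈ G.edgeSet, ∃ p : G.Path s t, e ∈ p.1.edges)
    (hTk : ∃ T : Finset V, IsTrackingSet G s t T ∧ T.card ≤ k)
    (u v : V) (m : ℕ) (P : Fin m → G.Walk u v) (hP : ∀ i, (P i).IsPath)
    (hinj : Function.Injective P)
    (hPdisj : ∀ i j, i ≠ j → ∀ w, w ∈ (P i).support → w ∈ (P j).support →
      w = u ∨ w = v) :
    m ≤ k + 1 := by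
  classical
  obtain ⟨T, hT, hTk⟩ := hTk
  rcases eq_or_ne u v with rfl | huv
  · have : Subsingleton (Fin m) := ⟨fun i j => hinj <|
      (isPath_iff_nil.mp (hP i)).eq_nil.trans (isPath_iff_nil.mp (hP j)).eq_nil.symm⟩
    have := Fintype.card_le_one_iff_subsingleton.mpr this
    rw [Fintype.card_fin] at this
    omega
  by_contra! hm
  set good := univ.filter fun i => (P i).InternallyAvoids T
  have hθ : IsUntrackedTheta T fun i : good => P i :=
    ⟨fun i => hP i, fun i j h => Subtype.ext (hinj h),
      fun i j hij => hPdisj i j (Subtype.coe_injective.ne hij), fun i => (mem_filter.mp i.2).2⟩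
  have hcard : 2 + #(T ∩ {u, v}) ≤ Fintype.card good := by
    rw [Fintype.card_coe]
    exact two_add_card_inter_le_card_filter_internallyAvoids hPdisj hTk (by simpa using hm)
  obtain ⟨i⟩ : Nonempty good := Fintype.card_pos_iff.mp (by omega)
  have hadj := (P i).adj_snd (not_nil_of_ne huv)
  obtain ⟨x, hx, y, hy, hxy, hnot⟩ := hT.exists_not_hasTwinPaths hpartE hadj
    (D := supportUnion fun i : good => P i) ⟨i, start_mem_support _⟩ ⟨i, getVert_mem_support _ _⟩
  exact hnot (hθ.hasTwinPaths huv hcard hx hy hxy)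

/-- if `G` has a tracking set of size at most `k` (and every
vertex/edge is on some s-t path), then any family of pairwise internally
vertex-disjoint `u`-`v` paths has at most `k + 1` members. -/
theorem disjoint_paths_le_k_add_one {V : Type*} [DecidableEq V]
    (G : SimpleGraph V) (s t : V) (k : ℕ)
    (hpartV : ∀ v : V, ∃ p : G.Path s t, v ∈ p.1.support)
    (hpartE : ∀ e ∈ G.edgeSet, ∃ p : G.Path s t, e ∈ p.1.edges)
    (hTk : ∃ T : Finset V, IsTrackingSet G s t T ∧ T.card ≤ k)
    (u v : V) (m : ℕ) (P : Fin m → G.Walk u v) (hP : ∀ i, (P i).IsPath)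
    (hinj : Function.Injective P)
    (hPdisj : ∀ i j, i ≠ j → ∀ w, w ∈ (P i).support → w ∈ (P j).support →
      w = u ∨ w = v) :
    m ≤ k + 1 :=
  disjoint_paths_le_k_add_one_general G s t k hpartE hTk u v m P hP hinj hPdisj
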